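/- For every natural number n ≥ 1, the polynomial identity (1/2)[ Σ_{k=0}^n (k!/2^k) C(n,k)^2 N^{↓(n-k)} + Σ_{k=0}^n ((-1)^k k!/2^k) C(n,k)^2 (N+1)^{↑(n-k)} ] = Σ_{j=0}^{⌊(n-1)/2⌋} α(n,2j) [ N^{n-2j} + (N+1)^{n-2j} ] holds in ℚ[N], where α(n,i) = (1/2) Σ_{k=0}^{i} (k!/2^k) C(n,k) C(n-1,k) s(n-k, n-i). -/
import Mathlib


open Polynomial

/-- Signed Stirling numbers of the first kind. -/
noncomputable def stirlingFirst (n i : ℕ) : ℤ := (descPochhammer ℤ n).coeff i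

/-- The coefficients `α(n,i)` of the symmetric Weyl-ordering expression. -/
noncomputable def alpha (n i : ℕ) : ℚ :=
  (1 / 2) * ∑ k ∈ Finset.range (i + 1),
    (k.factorial : ℚ) / 2 ^ k * (n.choose k : ℚ) * ((n - 1).choose k : ℚ) *
      (stirlingFirst (n - k) (n - i) : ℚ)

open Finset in
noncomputable def fall (m : ℕ) : ℚ[X] := ∏ j ∈ Finset.range m, (X - (j : ℚ[X]))
noncomputable def riseS (m : ℕ) : ℚ[X] := ∏ j ∈ Finset.range m, (X + (j : ℚ[X]) + 1)
noncomputable def rise0 (m : ℕ) : ℚ[X] := ∏ j ∈ Finset.range m, (X + (j : ℚ[X]))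

lemma fall_zero : fall 0 = 1 := by simp [fall]
lemma fall_succ (m : ℕ) : fall (m+1) = fall m * (X - (m : ℚ[X])) := by
  simp [fall, Finset.prod_range_succ]

lemma fall_eq_desc (m : ℕ) : fall m = descPochhammer ℚ m := by
  induction m with
  | zero => simp [fall]
  | succ m ih => rw [fall_succ, ih, descPochhammer_succ_right]

lemma fall_comp_succ (m : ℕ) :
    (fall (m+1)).comp (X + 1) = fall (m+1) + C ((m : ℚ)+1) * fall m := by
  have h : (fall (m+1)).comp (X + 1) = (X + 1) * fall m := by
    have h1 : fall (m+1) = (∏ j ∈ Finset.range m, (X - ((j+1:ℕ) : ℚ[X]))) * (X - ((0:ℕ) : ℚ[X])) := by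
      rw [fall]; exact Finset.prod_range_succ' _ m
    rw [h1, mul_comp, Polynomial.prod_comp]
    simp only [sub_comp, X_comp, natCast_comp]
    rw [show ∏ j ∈ Finset.range m, (X + 1 - ((j+1:ℕ) : ℚ[X])) = fall m from
      Finset.prod_congr rfl fun j _ => by push_cast; ring]
    push_cast; ring
  rw [h, fall_succ]
  rw [Polynomial.C_add, Polynomial.C_1, Polynomial.C_eq_natCast]
  ring

lemma fall_comp (m : ℕ) :
    (fall m).comp (X + 1) = fall m + C ((m : ℚ)) * fall (m-1) := by
  cases m with
  | zero => simp [fall_zero]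
  | succ m => rw [fall_comp_succ]; push_cast; ring_nf

lemma rise0_comp (m : ℕ) : (rise0 m).comp (X + 1) = riseS m := by
  rw [rise0, Polynomial.prod_comp, riseS]
  exact Finset.prod_congr rfl fun j _ => by simp [add_comp]; ring

lemma riseS_succ (m : ℕ) : riseS (m+1) = riseS m * (X + (m : ℚ[X]) + 1) := by
  simp [riseS, Finset.prod_range_succ]

lemma riseS_eq_succ (m : ℕ) : riseS (m+1) = rise0 (m+1) + C ((m:ℚ)+1) * riseS m := by
  have h0 : rise0 (m+1) = X * riseS m := by
    rw [rise0, Finset.prod_range_succ']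
    rw [show ∏ j ∈ Finset.range m, (X + ((j+1:ℕ) : ℚ[X])) = riseS m from
      Finset.prod_congr rfl fun j _ => by push_cast; ring]
    push_cast; ring
  rw [riseS_succ, h0, Polynomial.C_add, Polynomial.C_1, Polynomial.C_eq_natCast]
  ring

lemma riseS_eq (m : ℕ) : riseS m = rise0 m + C ((m:ℚ)) * riseS (m-1) := by
  cases m with
  | zero => simp [riseS, rise0]
  | succ m => rw [riseS_eq_succ]; push_cast; ring_nf

lemma rise0_eq (m : ℕ) : rise0 m = C ((-1:ℚ)^m) * (fall m).comp (-X) := by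
  rw [fall, Polynomial.prod_comp, rise0]
  simp only [sub_comp, X_comp, natCast_comp]
  rw [show ∏ j ∈ Finset.range m, (-X - (j : ℚ[X])) = ∏ j ∈ Finset.range m, (-1 : ℚ[X]) * (X + (j:ℚ[X])) from
    Finset.prod_congr rfl fun j _ => by ring]
  rw [Finset.prod_mul_distrib, Finset.prod_const]
  rw [map_pow, map_neg, map_one, ← mul_assoc, ← pow_add, Finset.card_range, ← two_mul, pow_mul]
  norm_num

def cc (n k : ℕ) : ℚ := (k.factorial : ℚ) / 2 ^ k * (n.choose k : ℚ) * ((n - 1).choose k : ℚ)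
def cc' (n k : ℕ) : ℚ := (k.factorial : ℚ) / 2 ^ k * (n.choose k : ℚ) ^ 2

lemma key (N k : ℕ) (hk : k ≤ N) :
    2 * (cc' (N+1) (k+1) - cc (N+1) (k+1)) = cc (N+1) k * (((N+1) - k : ℕ) : ℚ) := by
  have h1 : ((N+1).choose (k+1) : ℚ) = (N.choose k : ℚ) + (N.choose (k+1) : ℚ) := by
    exact_mod_cast congrArg (Nat.cast : ℕ → ℚ) (Nat.choose_succ_succ N k)
  have h2 : ((N+1).choose (k+1) : ℚ) * ((k:ℚ)+1) = ((N+1).choose k : ℚ) * ((N:ℚ) + 1 - (k:ℚ)) := by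
    have := congrArg (Nat.cast : ℕ → ℚ) (Nat.choose_succ_right_eq (N+1) k)
    push_cast [Nat.cast_sub (by omega : k ≤ N + 1)] at this
    linarith [this]
  simp only [cc, cc', Nat.add_sub_cancel]
  rw [Nat.factorial_succ, Nat.cast_sub (by omega : k ≤ N + 1)]
  push_cast
  rw [pow_succ]
  linear_combination (2 * ((k:ℚ)+1) * (k.factorial:ℚ)/(2^k*2) * ((N+1).choose (k+1) : ℚ)) * h1
    + ((k.factorial:ℚ)/2^k * (N.choose k : ℚ)) * h2

noncomputable def Pp (n : ℕ) : ℚ[X] := ∑ k ∈ Finset.range (n+1), C (cc n k) * fall (n - k)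
noncomputable def Pt (n : ℕ) : ℚ[X] :=
  ∑ k ∈ Finset.range (n+1), C ((-1:ℚ)^k * cc n k) * rise0 (n - k)

lemma C_two_mul (a : ℚ) : C (2*a) = 2 * C a := by
  rw [C_mul, map_ofNat]

lemma Pp_def (N : ℕ) : Pp (N+1) = ∑ k ∈ Finset.range (N+2), C (cc (N+1) k) * fall (N+1-k) := rfl

lemma telesc (N : ℕ) :
    ∑ k ∈ Finset.range (N+2), C (cc (N+1) k * (((N+1)-k : ℕ):ℚ)) * fall (N+1-k-1)
    = ∑ k ∈ Finset.range (N+2),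
        (C (2 * cc' (N+1) k) * fall (N+1-k) - C (2 * cc (N+1) k) * fall (N+1-k)) := by
  rw [Finset.sum_range_succ]
  conv_rhs => rw [Finset.sum_range_succ']
  have hlast : C (cc (N+1) (N+1) * (((N+1) - (N+1) : ℕ):ℚ)) * fall (N+1-(N+1)-1) = 0 := by
    simp
  have hfirst : C (2 * cc' (N+1) 0) * fall (N+1-0) - C (2 * cc (N+1) 0) * fall (N+1-0) = 0 := by
    simp [cc, cc']
  rw [hlast, hfirst, add_zero, add_zero]
  apply Finset.sum_congr rfl
  intro k hk
  have hk' : k ≤ N := by simpa [Nat.lt_succ_iff] using hk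
  have hsub : N+1-k-1 = N+1-(k+1) := by omega
  rw [hsub, ← sub_mul, ← map_sub,
    show 2 * cc' (N+1) (k+1) - 2 * cc (N+1) (k+1) = 2 * (cc' (N+1) (k+1) - cc (N+1) (k+1)) by ring,
    key N k hk']

lemma F_eq (N : ℕ) :
    Pp (N+1) + (Pp (N+1)).comp (X+1)
      = 2 * ∑ k ∈ Finset.range (N+2), C (cc' (N+1) k) * fall (N+1-k) := by
  have hcomp : (Pp (N+1)).comp (X+1) = ∑ k ∈ Finset.range (N+2),
      (C (cc (N+1) k) * fall (N+1-k) + C (cc (N+1) k * (((N+1)-k:ℕ):ℚ)) * fall (N+1-k-1)) := by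
    rw [Pp_def, Polynomial.sum_comp]
    apply Finset.sum_congr rfl
    intro k _
    rw [mul_comp, C_comp, fall_comp, mul_add, ← mul_assoc, ← C_mul]
  rw [hcomp, Pp_def, ← Finset.sum_add_distrib]
  have hsplit : ∀ k ∈ Finset.range (N+2),
      C (cc (N+1) k) * fall (N+1-k) +
        (C (cc (N+1) k) * fall (N+1-k) + C (cc (N+1) k * (((N+1)-k:ℕ):ℚ)) * fall (N+1-k-1))
      = C (2 * cc (N+1) k) * fall (N+1-k)
          + C (cc (N+1) k * (((N+1)-k:ℕ):ℚ)) * fall (N+1-k-1) := by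
    intro k _; rw [C_two_mul]; ring
  have hR : 2 * ∑ k ∈ Finset.range (N+2), C (cc' (N+1) k) * fall (N+1-k)
      = ∑ k ∈ Finset.range (N+2), C (2 * cc' (N+1) k) * fall (N+1-k) := by
    rw [Finset.mul_sum]
    exact Finset.sum_congr rfl fun k _ => by rw [C_two_mul]; ring
  rw [Finset.sum_congr rfl hsplit, Finset.sum_add_distrib, telesc, Finset.sum_sub_distrib, hR]
  abel

lemma Pt_def (N : ℕ) : Pt (N+1)
    = ∑ k ∈ Finset.range (N+2), C ((-1:ℚ)^k * cc (N+1) k) * rise0 (N+1-k) := rfl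

lemma telesc2 (N : ℕ) :
    ∑ k ∈ Finset.range (N+2), C ((-1:ℚ)^k * cc (N+1) k * (((N+1)-k : ℕ):ℚ)) * riseS (N+1-k-1)
    = ∑ k ∈ Finset.range (N+2),
        (C (2 * ((-1:ℚ)^k * cc (N+1) k)) * riseS (N+1-k)
          - C (2 * ((-1:ℚ)^k * cc' (N+1) k)) * riseS (N+1-k)) := by
  rw [Finset.sum_range_succ]
  conv_rhs => rw [Finset.sum_range_succ']
  have hlast : C ((-1:ℚ)^(N+1) * cc (N+1) (N+1) * (((N+1) - (N+1) : ℕ):ℚ))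
      * riseS (N+1-(N+1)-1) = 0 := by simp
  have hfirst : C (2 * ((-1:ℚ)^0 * cc (N+1) 0)) * riseS (N+1-0)
      - C (2 * ((-1:ℚ)^0 * cc' (N+1) 0)) * riseS (N+1-0) = 0 := by simp [cc, cc']
  rw [hlast, hfirst, add_zero, add_zero]
  apply Finset.sum_congr rfl
  intro k hk
  have hk' : k ≤ N := by simpa [Nat.lt_succ_iff] using hk
  have hsub : N+1-k-1 = N+1-(k+1) := by omega
  have h := key N k hk'
  rw [hsub, ← sub_mul, ← map_sub,
    show 2 * ((-1:ℚ)^(k+1) * cc (N+1) (k+1)) - 2 * ((-1:ℚ)^(k+1) * cc' (N+1) (k+1))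
      = (-1:ℚ)^k * (2 * (cc' (N+1) (k+1) - cc (N+1) (k+1))) by ring,
    key N k hk', mul_assoc]

lemma G_eq (N : ℕ) :
    Pt (N+1) + (Pt (N+1)).comp (X+1)
      = 2 * ∑ k ∈ Finset.range (N+2), C ((-1:ℚ)^k * cc' (N+1) k) * riseS (N+1-k) := by
  have hcomp : (Pt (N+1)).comp (X+1) = ∑ k ∈ Finset.range (N+2),
      C ((-1:ℚ)^k * cc (N+1) k) * riseS (N+1-k) := by
    rw [Pt_def, Polynomial.sum_comp]
    apply Finset.sum_congr rfl
    intro k _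
    rw [mul_comp, C_comp, rise0_comp]
  have hPt : Pt (N+1) = ∑ k ∈ Finset.range (N+2),
      (C ((-1:ℚ)^k * cc (N+1) k) * riseS (N+1-k)
        - C ((-1:ℚ)^k * cc (N+1) k * (((N+1)-k:ℕ):ℚ)) * riseS (N+1-k-1)) := by
    rw [Pt_def]
    apply Finset.sum_congr rfl
    intro k _
    rw [riseS_eq (N+1-k)]
    simp only [C_mul]
    ring
  rw [hcomp, hPt, ← Finset.sum_add_distrib]
  have hsplit : ∀ k ∈ Finset.range (N+2),
      (C ((-1:ℚ)^k * cc (N+1) k) * riseS (N+1-k)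
        - C ((-1:ℚ)^k * cc (N+1) k * (((N+1)-k:ℕ):ℚ)) * riseS (N+1-k-1))
       + C ((-1:ℚ)^k * cc (N+1) k) * riseS (N+1-k)
      = C (2 * ((-1:ℚ)^k * cc (N+1) k)) * riseS (N+1-k)
          - C ((-1:ℚ)^k * cc (N+1) k * (((N+1)-k:ℕ):ℚ)) * riseS (N+1-k-1) := by
    intro k _; rw [C_two_mul]; ring
  have hR : 2 * ∑ k ∈ Finset.range (N+2), C ((-1:ℚ)^k * cc' (N+1) k) * riseS (N+1-k)
      = ∑ k ∈ Finset.range (N+2), C (2 * ((-1:ℚ)^k * cc' (N+1) k)) * riseS (N+1-k) := by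
    rw [Finset.mul_sum]
    exact Finset.sum_congr rfl fun k _ => by rw [C_two_mul]; ring
  rw [Finset.sum_congr rfl hsplit, Finset.sum_sub_distrib, telesc2, Finset.sum_sub_distrib, hR]
  abel

lemma fall_coeff (m l : ℕ) : (fall m).coeff l = (stirlingFirst m l : ℚ) := by
  rw [fall_eq_desc, ← descPochhammer_map (Int.castRingHom ℚ) m, coeff_map]
  simp [stirlingFirst]

lemma stirling_eq_zero {m l : ℕ} (h : m < l) : stirlingFirst m l = 0 := by
  rw [stirlingFirst]
  exact Polynomial.coeff_eq_zero_of_natDegree_lt (by rwa [descPochhammer_natDegree])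

lemma fall_as_sum (m n : ℕ) (h : m ≤ n) :
    fall m = ∑ l ∈ Finset.range (n+1), C ((stirlingFirst m l : ℚ)) * X^l := by
  have hdeg : (fall m).natDegree < n+1 := by
    rw [fall_eq_desc, descPochhammer_natDegree]; omega
  conv_lhs => rw [Polynomial.as_sum_range' _ (n+1) hdeg]
  exact Finset.sum_congr rfl fun l _ => by rw [← fall_coeff, C_mul_X_pow_eq_monomial]

lemma Pp_eq (N : ℕ) :
    Pp (N+1) = ∑ i ∈ Finset.range (N+2), C (2 * alpha (N+1) i) * X^(N+1-i) := by
  have h1 : Pp (N+1) = ∑ k ∈ Finset.range (N+2), ∑ l ∈ Finset.range (N+2),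
      C (cc (N+1) k * (stirlingFirst (N+1-k) l : ℚ)) * X^l := by
    rw [Pp_def]
    apply Finset.sum_congr rfl
    intro k _
    rw [fall_as_sum (N+1-k) (N+1) (by omega), Finset.mul_sum]
    exact Finset.sum_congr rfl fun l _ => by rw [← mul_assoc, ← C_mul]
  rw [h1, Finset.sum_comm, ← Finset.sum_range_reflect]
  apply Finset.sum_congr rfl
  intro i hi
  have hi' : i ≤ N+1 := by simpa [Nat.lt_succ_iff] using hi
  have hidx : N+2-1-i = N+1-i := by omega
  rw [hidx, ← Finset.sum_mul, ← map_sum]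
  congr 2
  rw [alpha, ← mul_assoc]
  norm_num
  rw [← Finset.sum_subset (Finset.range_subset_range.mpr (show i+1 ≤ N+2 by omega))]
  · apply Finset.sum_congr rfl
    intro k _
    simp only [cc, Nat.add_sub_cancel]
  · intro k hk1 hk2
    have hkN : k ≤ N+1 := by simpa [Nat.lt_succ_iff] using hk1
    have hk : i < k := by simpa [Nat.lt_succ_iff] using hk2
    rw [stirling_eq_zero (show N+1-k < N+1-i by omega)]
    simp

lemma Pt_eq (N : ℕ) :
    Pt (N+1) = ∑ i ∈ Finset.range (N+2), C ((-1:ℚ)^i * (2 * alpha (N+1) i)) * X^(N+1-i) := by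
  have hPt : Pt (N+1) = C ((-1:ℚ)^(N+1)) * (Pp (N+1)).comp (-X) := by
    rw [Pt_def, Pp_def, Polynomial.sum_comp, Finset.mul_sum]
    apply Finset.sum_congr rfl
    intro k hk
    have hk' : k ≤ N+1 := by simpa [Nat.lt_succ_iff] using hk
    rw [mul_comp, C_comp, rise0_eq (N+1-k), ← mul_assoc, ← C_mul, ← mul_assoc, ← C_mul]
    congr 2
    rw [show (-1:ℚ)^k * cc (N+1) k * (-1)^(N+1-k)
        = ((-1:ℚ)^(k + (N+1-k))) * cc (N+1) k by rw [pow_add]; ring]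
    congr 2
    omega
  rw [hPt, Pp_eq, Polynomial.sum_comp, Finset.mul_sum]
  apply Finset.sum_congr rfl
  intro i hi
  have hi' : i ≤ N+1 := by simpa [Nat.lt_succ_iff] using hi
  rw [mul_comp, C_comp, X_pow_comp]
  rw [show ((-X : ℚ[X]))^(N+1-i) = (-1:ℚ[X])^(N+1-i) * X^(N+1-i) by rw [neg_pow]]
  rw [show (C ((-1:ℚ)^(N+1)) : ℚ[X]) = (-1:ℚ[X])^(N+1) by rw [map_pow]; norm_num]
  rw [show (C ((-1:ℚ)^i * (2 * alpha (N+1) i)) : ℚ[X])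
      = (-1:ℚ[X])^i * C (2 * alpha (N+1) i) by rw [C_mul, map_pow]; norm_num]
  have hsign : (-1:ℚ[X])^(N+1) * (-1:ℚ[X])^(N+1-i) = (-1:ℚ[X])^i := by
    rw [← pow_add, show ((N+1) + (N+1-i)) = 2*(N+1-i) + i from by omega, pow_add, pow_mul,
      neg_one_sq, one_pow, one_mul]
  calc (-1:ℚ[X])^(N+1) * (C (2 * alpha (N+1) i) * ((-1:ℚ[X])^(N+1-i) * X^(N+1-i)))
      = ((-1:ℚ[X])^(N+1) * (-1:ℚ[X])^(N+1-i)) * (C (2 * alpha (N+1) i) * X^(N+1-i)) := by ring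
    _ = (-1:ℚ[X])^i * C (2 * alpha (N+1) i) * X^(N+1-i) := by rw [hsign]; ring

lemma stirling_zero_right {m : ℕ} (hm : 1 ≤ m) : stirlingFirst m 0 = 0 := by
  rw [stirlingFirst, Polynomial.coeff_zero_eq_eval_zero, descPochhammer_eval_zero,
    if_neg (by omega)]

lemma alpha_top (N : ℕ) : alpha (N+1) (N+1) = 0 := by
  rw [alpha, Finset.sum_eq_zero, mul_zero]
  intro k hk
  have hk' : k ≤ N+1 := by simpa [Nat.lt_succ_iff] using hk
  rcases Nat.lt_or_ge k (N+1) with h | h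
  · rw [Nat.sub_self, stirling_zero_right (show 1 ≤ N+1-k by omega)]
    simp
  · have hkeq : k = N+1 := by omega
    subst hkeq
    rw [Nat.add_sub_cancel, Nat.choose_eq_zero_of_lt (show N < N+1 by omega)]
    simp

lemma even_sum (M : ℕ) (f : ℕ → ℚ[X]) :
    ∑ i ∈ (Finset.range (M+1)).filter (fun i => Even i), f i
      = ∑ j ∈ Finset.range (M/2+1), f (2*j) := by
  apply Finset.sum_nbij' (fun i => i/2) (fun j => 2*j)
  · intro a ha
    simp only [Finset.mem_filter, Finset.mem_range] at ha
    obtain ⟨ha1, j, hj⟩ := ha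
    simp only [Finset.mem_range]
    omega
  · intro j hj
    simp only [Finset.mem_range] at hj
    simp only [Finset.mem_filter, Finset.mem_range]
    constructor
    · omega
    · exact ⟨j, by omega⟩
  · intro a ha
    simp only [Finset.mem_filter, Finset.mem_range] at ha
    obtain ⟨ha1, j, hj⟩ := ha
    omega
  · intro j hj; omega
  · intro a ha
    simp only [Finset.mem_filter, Finset.mem_range] at ha
    obtain ⟨ha1, j, hj⟩ := ha
    congr 1
    omega

lemma PpPt (N : ℕ) :
    Pp (N+1) + Pt (N+1)
      = ∑ j ∈ Finset.range (N/2 + 1), C (4 * alpha (N+1) (2*j)) * X^(N+1-2*j) := by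
  rw [Pp_eq, Pt_eq, ← Finset.sum_add_distrib]
  have h1 : ∀ i ∈ Finset.range (N+2),
      C (2 * alpha (N+1) i) * X^(N+1-i) + C ((-1:ℚ)^i * (2 * alpha (N+1) i)) * X^(N+1-i)
      = if Even i then C (4 * alpha (N+1) i) * X^(N+1-i) else 0 := by
    intro i _
    rcases Nat.even_or_odd i with h | h
    · rw [if_pos h, h.neg_one_pow, ← add_mul, ← map_add]
      congr 2
      ring
    · rw [if_neg (Nat.not_even_iff_odd.mpr h), h.neg_one_pow, ← add_mul, ← map_add]
      rw [show 2 * alpha (N+1) i + (-1) * (2 * alpha (N+1) i) = 0 by ring]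
      simp
  rw [Finset.sum_congr rfl h1, ← Finset.sum_filter]
  have h2 := even_sum (N+1) (fun i => C (4 * alpha (N+1) i) * X^(N+1-i))
  rw [h2]
  rcases Nat.even_or_odd N with h | h
  · obtain ⟨m, rfl⟩ := h
    rw [show (m+m+1)/2 = (m+m)/2 from by omega]
  · obtain ⟨m, rfl⟩ := h
    have hr : (2*m+1+1)/2 + 1 = ((2*m+1)/2 + 1) + 1 := by omega
    rw [hr, Finset.sum_range_succ]
    rw [show 2 * (((2*m+1)/2)+1) = (2*m+1)+1 by omega, alpha_top]
    simp

lemma C4 : (4:ℚ[X]) = C (4:ℚ) := (map_ofNat C 4).symm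

theorem weyl_symmetric_expression (n : ℕ) (hn : 1 ≤ n) :
    C (1 / 2 : ℚ) *
      ((∑ k ∈ Finset.range (n + 1),
          C ((k.factorial : ℚ) / 2 ^ k * (n.choose k : ℚ) ^ 2) *
            ∏ j ∈ Finset.range (n - k), (X - (j : ℚ[X]))) +
        ∑ k ∈ Finset.range (n + 1),
          C ((-1 : ℚ) ^ k * (k.factorial : ℚ) / 2 ^ k * (n.choose k : ℚ) ^ 2) *
            ∏ j ∈ Finset.range (n - k), (X + (j : ℚ[X]) + 1)) =
      ∑ j ∈ Finset.range ((n - 1) / 2 + 1),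
        C (alpha n (2 * j)) * (X ^ (n - 2 * j) + (X + 1) ^ (n - 2 * j)) := by
  obtain ⟨N, rfl⟩ : ∃ N, n = N + 1 := ⟨n - 1, by omega⟩
  have hF : (∑ k ∈ Finset.range (N + 1 + 1),
      C ((k.factorial : ℚ) / 2 ^ k * ((N+1).choose k : ℚ) ^ 2) *
        ∏ j ∈ Finset.range (N+1-k), (X - (j : ℚ[X])))
      = ∑ k ∈ Finset.range (N+2), C (cc' (N+1) k) * fall (N+1-k) := rfl
  have hG : (∑ k ∈ Finset.range (N + 1 + 1),
      C ((-1 : ℚ) ^ k * (k.factorial : ℚ) / 2 ^ k * ((N+1).choose k : ℚ) ^ 2) *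
        ∏ j ∈ Finset.range (N+1-k), (X + (j : ℚ[X]) + 1))
      = ∑ k ∈ Finset.range (N+2), C ((-1:ℚ)^k * cc' (N+1) k) * riseS (N+1-k) := by
    apply Finset.sum_congr rfl
    intro k _
    congr 1
    rw [cc']
    ring
  rw [hF, hG]
  apply mul_left_cancel₀ (show (4:ℚ[X]) ≠ 0 by norm_num)
  have hL : (4:ℚ[X]) * (C (1/2:ℚ) *
      ((∑ k ∈ Finset.range (N+2), C (cc' (N+1) k) * fall (N+1-k)) +
        ∑ k ∈ Finset.range (N+2), C ((-1:ℚ)^k * cc' (N+1) k) * riseS (N+1-k)))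
      = (2 * ∑ k ∈ Finset.range (N+2), C (cc' (N+1) k) * fall (N+1-k))
        + 2 * ∑ k ∈ Finset.range (N+2), C ((-1:ℚ)^k * cc' (N+1) k) * riseS (N+1-k) := by
    rw [C4, ← mul_assoc, ← C_mul, show (4:ℚ) * (1/2) = 2 by norm_num,
      show C (2:ℚ) = (2:ℚ[X]) from map_ofNat C 2]
    ring
  rw [hL, ← F_eq, ← G_eq]
  have hT : Pp (N+1) + (Pp (N+1)).comp (X+1) + (Pt (N+1) + (Pt (N+1)).comp (X+1))
      = (Pp (N+1) + Pt (N+1)) + (Pp (N+1) + Pt (N+1)).comp (X+1) := by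
    rw [add_comp]
    ring
  rw [hT, PpPt]
  have hcomp : (∑ j ∈ Finset.range (N/2 + 1), C (4 * alpha (N+1) (2*j)) * X^(N+1-2*j)).comp (X+1)
      = ∑ j ∈ Finset.range (N/2 + 1), C (4 * alpha (N+1) (2*j)) * (X+1)^(N+1-2*j) := by
    rw [Polynomial.sum_comp]
    exact Finset.sum_congr rfl fun j _ => by rw [mul_comp, C_comp, X_pow_comp]
  rw [hcomp, ← Finset.sum_add_distrib]
  rw [show (N+1-1)/2 + 1 = N/2 + 1 by omega]
  rw [Finset.mul_sum]
  apply Finset.sum_congr rfl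
  intro j _
  rw [C4, ← mul_assoc, ← C_mul, ← mul_add]
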